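/- Among all triangles inscribed in a given acute triangle ABC (with one vertex on each side), the orthic triangle, with vertices at the feet of the three altitudes, has the minimal perimeter. -/

import Mathlib

open EuclideanGeometry
open scoped RealInnerProductSpace

noncomputable section

abbrev Pt := EuclideanSpace ℝ (Fin 2)

private lemma inner_pos_of_angle_lt_pi_div_two {V : Type*} [NormedAddCommGroup V]
    [InnerProductSpace ℝ V] (x y : V)
    (h : InnerProductGeometry.angle x y < Real.pi / 2) : 0 < ⟪x, y⟫ := by
  have hcos : 0 < Real.cos (InnerProductGeometry.angle x y) := by
    apply Real.cos_pos_of_mem_Ioo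
    constructor
    · have := InnerProductGeometry.angle_nonneg x y
      have := Real.pi_pos
      linarith
    · exact h
  have hne : ⟪x, y⟫ ≠ 0 := by
    intro h0
    rw [InnerProductGeometry.inner_eq_zero_iff_angle_eq_pi_div_two] at h0
    rw [h0] at h
    exact lt_irrefl _ h
  have hkey := InnerProductGeometry.cos_angle_mul_norm_mul_norm x y
  rcases (mul_nonneg (norm_nonneg x) (norm_nonneg y)).lt_or_eq with h' | h'
  · rw [← hkey]; exact mul_pos hcos h'
  · exfalso; apply hne; rw [← hkey, ← h', mul_zero]

private lemma val_nP (x y z tK tL : ℝ) (hx0 : x ≠ 0) (hy0 : y ≠ 0)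
    (htK : tK = (x + z) / x) (htL : tL = -z / y) :
    (1 - tK) * (1 - tK) * x + ((1 - tK) * tL + tL * (1 - tK)) * z + tL * tL * y
      = z ^ 2 * (x + y + 2 * z) / (x * y) := by
  subst htK htL
  field_simp
  ring

private lemma val_nQ (x y z tL tM : ℝ) (hy0 : y ≠ 0) (hd0 : x + y + 2 * z ≠ 0)
    (htL : tL = -z / y) (htM : tM = (y + z) / (x + y + 2 * z)) :
    (-tM) * (-tM) * x + ((-tM) * (1 - tM - tL) + (1 - tM - tL) * (-tM)) * z
      + (1 - tM - tL) * (1 - tM - tL) * y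
      = x * (y + z) ^ 2 / (y * (x + y + 2 * z)) := by
  subst htL htM
  have hd0' : x + y + z * 2 ≠ 0 := by rwa [mul_comm 2 z] at hd0
  field_simp
  ring

private lemma val_nR (x y z tK tM : ℝ) (hx0 : x ≠ 0) (hd0 : x + y + 2 * z ≠ 0)
    (htK : tK = (x + z) / x) (htM : tM = (y + z) / (x + y + 2 * z)) :
    (tK - 1 + tM) * (tK - 1 + tM) * x + ((tK - 1 + tM) * (tM - 1) + (tM - 1) * (tK - 1 + tM)) * z
      + (tM - 1) * (tM - 1) * y
      = y * (x + z) ^ 2 / (x * (x + y + 2 * z)) := by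
  subst htK htM
  have hd0' : x + y + z * 2 ≠ 0 := by rwa [mul_comm 2 z] at hd0
  field_simp
  ring

private lemma val_eP (x y z tK tL s t : ℝ) (hx0 : x ≠ 0) (hy0 : y ≠ 0)
    (htK : tK = (x + z) / x) (htL : tL = -z / y) :
    (1 - s) * (1 - tK) * x + ((1 - s) * tL + t * (1 - tK)) * z + t * tL * y
      = z ^ 2 * (x + y + 2 * z) / (x * y)
        + (t - tL) * (-z * (x + z) / x) - (s - tK) * (-z * (y + z) / y) := by
  subst htK htL
  field_simp
  ring

private lemma val_eQ (x y z tL tM t r : ℝ) (hy0 : y ≠ 0) (hd0 : x + y + 2 * z ≠ 0)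
    (htL : tL = -z / y) (htM : tM = (y + z) / (x + y + 2 * z)) :
    (-r) * (-tM) * x + ((-r) * (1 - tM - tL) + (1 - r - t) * (-tM)) * z
      + (1 - r - t) * (1 - tM - tL) * y
      = x * (y + z) ^ 2 / (y * (x + y + 2 * z))
        - (r - tM) * (z * (y + z) / y) - (t - tL) * ((x + z) * (y + z) / (x + y + 2 * z)) := by
  subst htL htM
  have hd0' : x + y + z * 2 ≠ 0 := by rwa [mul_comm 2 z] at hd0
  field_simp
  ring

private lemma val_eR (x y z tK tM s r : ℝ) (hx0 : x ≠ 0) (hd0 : x + y + 2 * z ≠ 0)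
    (htK : tK = (x + z) / x) (htM : tM = (y + z) / (x + y + 2 * z)) :
    (s - 1 + r) * (tK - 1 + tM) * x + ((s - 1 + r) * (tM - 1) + (r - 1) * (tK - 1 + tM)) * z
      + (r - 1) * (tM - 1) * y
      = y * (x + z) ^ 2 / (x * (x + y + 2 * z))
        + (s - tK) * ((x + z) * (y + z) / (x + y + 2 * z)) + (r - tM) * (z * (x + z) / x) := by
  subst htK htM
  have hd0' : x + y + z * 2 ≠ 0 := by rwa [mul_comm 2 z] at hd0
  field_simp
  ring

set_option maxHeartbeats 2000000 in
private lemma scalar_key (x y z α β γ nP nQ nR p' q' r' : ℝ)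
    (hxz : 0 < x + z) (hyz : 0 < y + z) (hz : z < 0)
    (hnP0 : 0 ≤ nP) (hnQ0 : 0 ≤ nQ) (hnR0 : 0 ≤ nR)
    (nP2 : nP ^ 2 = z ^ 2 * (x + y + 2 * z) / (x * y))
    (nQ2 : nQ ^ 2 = x * (y + z) ^ 2 / (y * (x + y + 2 * z)))
    (nR2 : nR ^ 2 = y * (x + z) ^ 2 / (x * (x + y + 2 * z)))
    (csP : z ^ 2 * (x + y + 2 * z) / (x * y)
      + β * (-z * (x + z) / x) - α * (-z * (y + z) / y) ≤ p' * nP)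
    (csQ : x * (y + z) ^ 2 / (y * (x + y + 2 * z))
      - γ * (z * (y + z) / y) - β * ((x + z) * (y + z) / (x + y + 2 * z)) ≤ q' * nQ)
    (csR : y * (x + z) ^ 2 / (x * (x + y + 2 * z))
      + α * ((x + z) * (y + z) / (x + y + 2 * z)) + γ * (z * (x + z) / x) ≤ r' * nR) :
    nP + nQ + nR ≤ p' + q' + r' := by
  have hx : 0 < x := by linarith
  have hy : 0 < y := by linarith
  have hd : 0 < x + y + 2 * z := by linarith
  have hx0 : x ≠ 0 := ne_of_gt hx
  have hy0 : y ≠ 0 := ne_of_gt hy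
  have hd0 : x + y + 2 * z ≠ 0 := ne_of_gt hd
  have hnP : 0 < nP := by
    have hval : (0 : ℝ) < z ^ 2 * (x + y + 2 * z) / (x * y) :=
      div_pos (by nlinarith [mul_pos (mul_pos (neg_pos.mpr hz) (neg_pos.mpr hz)) hd])
        (mul_pos hx hy)
    nlinarith [hval, nP2]
  have hnQ : 0 < nQ := by
    have hval : (0 : ℝ) < x * (y + z) ^ 2 / (y * (x + y + 2 * z)) :=
      div_pos (by nlinarith [mul_pos hx (mul_pos hyz hyz)]) (mul_pos hy hd)
    nlinarith [hval, nQ2]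
  have hnR : 0 < nR := by
    have hval : (0 : ℝ) < y * (x + z) ^ 2 / (x * (x + y + 2 * z)) :=
      div_pos (by nlinarith [mul_pos hy (mul_pos hxz hxz)]) (mul_pos hx hd)
    nlinarith [hval, nR2]
  have b1 : (-z * (y + z) / y) * nR = ((x + z) * (y + z) / (x + y + 2 * z)) * nP := by
    refine (sq_eq_sq₀ ?_ ?_).mp ?_
    · exact mul_nonneg (div_nonneg (by nlinarith) hy.le) hnR0
    · exact mul_nonneg (div_nonneg (by nlinarith) hd.le) hnP0
    · rw [mul_pow, mul_pow, nR2, nP2]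
      field_simp
  have b2 : (-z * (x + z) / x) * nQ = ((x + z) * (y + z) / (x + y + 2 * z)) * nP := by
    refine (sq_eq_sq₀ ?_ ?_).mp ?_
    · exact mul_nonneg (div_nonneg (by nlinarith) hx.le) hnQ0
    · exact mul_nonneg (div_nonneg (by nlinarith) hd.le) hnP0
    · rw [mul_pow, mul_pow, nQ2, nP2]
      field_simp
  have b3 : (-(z * (y + z) / y)) * nR = (-(z * (x + z) / x)) * nQ := by
    refine (sq_eq_sq₀ ?_ ?_).mp ?_
    · refine mul_nonneg ?_ hnR0
      rw [neg_nonneg]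
      exact div_nonpos_of_nonpos_of_nonneg (by nlinarith) hy.le
    · refine mul_nonneg ?_ hnQ0
      rw [neg_nonneg]
      exact div_nonpos_of_nonpos_of_nonneg (by nlinarith) hx.le
    · rw [mul_pow, mul_pow, nR2, nQ2]
      field_simp
  have m1 := mul_le_mul_of_nonneg_right csP (mul_nonneg hnQ0 hnR0)
  have m2 := mul_le_mul_of_nonneg_right csQ (mul_nonneg hnP0 hnR0)
  have m3 := mul_le_mul_of_nonneg_right csR (mul_nonneg hnP0 hnQ0)
  have c1 : α * ((x + z) * (y + z) / (x + y + 2 * z)) * (nP * nQ)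
      + α * (z * (y + z) / y) * (nQ * nR) = 0 := by
    linear_combination (-α * nQ) * b1
  have c2 : β * (-z * (x + z) / x) * (nQ * nR)
      - β * ((x + z) * (y + z) / (x + y + 2 * z)) * (nP * nR) = 0 := by
    linear_combination (β * nR) * b2
  have c3 : -(γ * (z * (y + z) / y) * (nP * nR))
      + γ * (z * (x + z) / x) * (nP * nQ) = 0 := by
    linear_combination (γ * nP) * b3
  have nn1 : nP ^ 2 * (nQ * nR) = z ^ 2 * (x + y + 2 * z) / (x * y) * (nQ * nR) := by rw [nP2]
  have nn2 : nQ ^ 2 * (nP * nR) = x * (y + z) ^ 2 / (y * (x + y + 2 * z)) * (nP * nR) := by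
    rw [nQ2]
  have nn3 : nR ^ 2 * (nP * nQ) = y * (x + z) ^ 2 / (x * (x + y + 2 * z)) * (nP * nQ) := by
    rw [nR2]
  have hsum := add_le_add (add_le_add m1 m2) m3
  have e1 : (nP + nQ + nR) * (nP * nQ * nR)
      = (z ^ 2 * (x + y + 2 * z) / (x * y)
          + β * (-z * (x + z) / x) - α * (-z * (y + z) / y)) * (nQ * nR)
        + (x * (y + z) ^ 2 / (y * (x + y + 2 * z))
          - γ * (z * (y + z) / y) - β * ((x + z) * (y + z) / (x + y + 2 * z))) * (nP * nR)
        + (y * (x + z) ^ 2 / (x * (x + y + 2 * z))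
          + α * ((x + z) * (y + z) / (x + y + 2 * z)) + γ * (z * (x + z) / x)) * (nP * nQ) := by
    linear_combination nn1 + nn2 + nn3 - c1 - c2 - c3
  have key : (nP + nQ + nR) * (nP * nQ * nR) ≤ (p' + q' + r') * (nP * nQ * nR) := by
    rw [e1]
    refine le_trans hsum (le_of_eq ?_)
    ring
  exact le_of_mul_le_mul_right key (mul_pos (mul_pos hnP hnQ) hnR)

set_option maxHeartbeats 1000000 in
/-- Among all triangles inscribed in a given acute triangle (one vertex on each side),
the orthic triangle has minimal perimeter. -/
theorem orthic_triangle_minimal_perimeter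
    (A B C K L M : Pt)
    (hABC : AffineIndependent ℝ ![A, B, C])
    (hacuteA : ∠ B A C < Real.pi / 2)
    (hacuteB : ∠ A B C < Real.pi / 2)
    (hacuteC : ∠ B C A < Real.pi / 2)
    (hKline : ∃ t : ℝ, K = B + t • (C - B)) (hKfoot : ⟪A - K, C - B⟫ = 0)
    (hLline : ∃ t : ℝ, L = C + t • (A - C)) (hLfoot : ⟪B - L, A - C⟫ = 0)
    (hMline : ∃ t : ℝ, M = A + t • (B - A)) (hMfoot : ⟪C - M, B - A⟫ = 0) :
    ∀ K' ∈ segment ℝ B C, ∀ L' ∈ segment ℝ C A, ∀ M' ∈ segment ℝ A B,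
      dist K L + dist L M + dist M K ≤ dist K' L' + dist L' M' + dist M' K' := by
  intro K' hK' L' hL' M' hM'
  obtain ⟨tK, hK⟩ := hKline
  obtain ⟨tL, hL⟩ := hLline
  obtain ⟨tM, hM⟩ := hMline
  set u : Pt := C - B with hu
  set v : Pt := A - C with hv
  obtain ⟨x, hxd⟩ : ∃ r : ℝ, r = ⟪u, u⟫ := ⟨_, rfl⟩
  obtain ⟨y, hyd⟩ : ∃ r : ℝ, r = ⟪v, v⟫ := ⟨_, rfl⟩
  obtain ⟨z, hzd⟩ : ∃ r : ℝ, r = ⟪u, v⟫ := ⟨_, rfl⟩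
  have expand : ∀ a b c d : ℝ, ⟪a • u + b • v, c • u + d • v⟫
      = a * c * x + (a * d + b * c) * z + b * d * y := by
    intro a b c d
    rw [hxd, hyd, hzd]
    simp only [PiLp.inner_apply, RCLike.inner_apply, conj_trivial, PiLp.add_apply,
      PiLp.smul_apply, smul_eq_mul, Fin.sum_univ_two]
    ring
  have expandU : ∀ a b : ℝ, ⟪a • u + b • v, u⟫ = a * x + b * z := by
    intro a b
    rw [hxd, hzd]
    simp only [PiLp.inner_apply, RCLike.inner_apply, conj_trivial, PiLp.add_apply,
      PiLp.smul_apply, smul_eq_mul, Fin.sum_univ_two]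
    ring
  have expandV : ∀ a b : ℝ, ⟪a • u + b • v, v⟫ = a * z + b * y := by
    intro a b
    rw [hyd, hzd]
    simp only [PiLp.inner_apply, RCLike.inner_apply, conj_trivial, PiLp.add_apply,
      PiLp.smul_apply, smul_eq_mul, Fin.sum_univ_two]
    ring
  -- acuteness in scalar form
  have hyz : 0 < y + z := by
    have h := inner_pos_of_angle_lt_pi_div_two (B - A) (C - A) hacuteA
    have hBA : B - A = (-1 : ℝ) • u + (-1 : ℝ) • v := by rw [hu, hv]; module
    have hCA : C - A = (0 : ℝ) • u + (-1 : ℝ) • v := by rw [hu, hv]; module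
    rw [hBA, hCA, expand] at h
    linarith
  have hxz : 0 < x + z := by
    have h := inner_pos_of_angle_lt_pi_div_two (A - B) (C - B) hacuteB
    have hAB : A - B = (1 : ℝ) • u + (1 : ℝ) • v := by rw [hu, hv]; module
    have hCB : C - B = (1 : ℝ) • u + (0 : ℝ) • v := by rw [hu, hv]; module
    rw [hAB, hCB, expand] at h
    linarith
  have hz : z < 0 := by
    have h := inner_pos_of_angle_lt_pi_div_two (B - C) (A - C) hacuteC
    have hBC : B - C = (-1 : ℝ) • u + (0 : ℝ) • v := by rw [hu, hv]; module
    have hAC : A - C = (0 : ℝ) • u + (1 : ℝ) • v := by rw [hu, hv]; module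
    rw [hBC, hAC, expand] at h
    linarith
  have hx : 0 < x := by linarith
  have hy : 0 < y := by linarith
  have hd : 0 < x + y + 2 * z := by linarith
  have hx0 : x ≠ 0 := ne_of_gt hx
  have hy0 : y ≠ 0 := ne_of_gt hy
  have hd0 : x + y + 2 * z ≠ 0 := ne_of_gt hd
  -- foot equations give the parameters of K, L, M
  have htK : tK = (x + z) / x := by
    have hAK : A - K = (1 - tK) • u + (1 : ℝ) • v := by rw [hK, hu, hv]; module
    rw [hAK, expandU] at hKfoot
    rw [eq_div_iff hx0]
    linarith
  have htL : tL = -z / y := by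
    have hBL : B - L = (-1 : ℝ) • u + (-tL) • v := by rw [hL, hu, hv]; module
    rw [hBL, expandV] at hLfoot
    rw [eq_div_iff hy0]
    linarith
  have htM : tM = (y + z) / (x + y + 2 * z) := by
    have hCM : C - M = tM • u + (tM - 1) • v := by rw [hM, hu, hv]; module
    have hBA : B - A = (-1 : ℝ) • u + (-1 : ℝ) • v := by rw [hu, hv]; module
    rw [hCM, hBA, expand] at hMfoot
    rw [eq_div_iff hd0]
    linarith
  -- combination forms of the orthic sides
  have hPc : L - K = (1 - tK) • u + tL • v := by rw [hK, hL, hu, hv]; module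
  have hQc : M - L = (-tM) • u + (1 - tM - tL) • v := by rw [hL, hM, hu, hv]; module
  have hRc : K - M = (tK - 1 + tM) • u + (tM - 1) • v := by rw [hK, hM, hu, hv]; module
  -- parameters of the competitor points
  obtain ⟨a1, s, ha1, hs0, has, hKe⟩ := hK'
  obtain ⟨a2, t, ha2, ht0, hat, hLe⟩ := hL'
  obtain ⟨a3, r, ha3, hr0, har, hMe⟩ := hM'
  have hK'e : K' = B + s • u := by
    rw [← hKe, hu, show a1 = 1 - s by linarith]; module
  have hL'e : L' = C + t • v := by
    rw [← hLe, hv, show a2 = 1 - t by linarith]; module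
  have hM'e : M' = A + r • (B - A) := by
    rw [← hMe, show a3 = 1 - r by linarith]; module
  have hP'c : L' - K' = (1 - s) • u + t • v := by rw [hK'e, hL'e, hu, hv]; module
  have hQ'c : M' - L' = (-r) • u + (1 - r - t) • v := by rw [hL'e, hM'e, hu, hv]; module
  have hR'c : K' - M' = (s - 1 + r) • u + (r - 1) • v := by rw [hK'e, hM'e, hu, hv]; module
  -- squared norms of the orthic sides
  have nP2 : ‖L - K‖ ^ 2 = z ^ 2 * (x + y + 2 * z) / (x * y) := by
    rw [← real_inner_self_eq_norm_sq, hPc, expand]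
    exact val_nP x y z tK tL hx0 hy0 htK htL
  have nQ2 : ‖M - L‖ ^ 2 = x * (y + z) ^ 2 / (y * (x + y + 2 * z)) := by
    rw [← real_inner_self_eq_norm_sq, hQc, expand]
    exact val_nQ x y z tL tM hy0 hd0 htL htM
  have nR2 : ‖K - M‖ ^ 2 = y * (x + z) ^ 2 / (x * (x + y + 2 * z)) := by
    rw [← real_inner_self_eq_norm_sq, hRc, expand]
    exact val_nR x y z tK tM hx0 hd0 htK htM
  -- Cauchy–Schwarz bounds on the competitor sides
  have csP : z ^ 2 * (x + y + 2 * z) / (x * y)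
      + (t - tL) * (-z * (x + z) / x) - (s - tK) * (-z * (y + z) / y)
      ≤ ‖L' - K'‖ * ‖L - K‖ := by
    have h := real_inner_le_norm (L' - K') (L - K)
    rw [hP'c, hPc, expand] at h
    rw [← val_eP x y z tK tL s t hx0 hy0 htK htL]
    rw [hP'c, hPc]
    exact h
  have csQ : x * (y + z) ^ 2 / (y * (x + y + 2 * z))
      - (r - tM) * (z * (y + z) / y) - (t - tL) * ((x + z) * (y + z) / (x + y + 2 * z))
      ≤ ‖M' - L'‖ * ‖M - L‖ := by
    have h := real_inner_le_norm (M' - L') (M - L)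
    rw [hQ'c, hQc, expand] at h
    rw [← val_eQ x y z tL tM t r hy0 hd0 htL htM]
    rw [hQ'c, hQc]
    exact h
  have csR : y * (x + z) ^ 2 / (x * (x + y + 2 * z))
      + (s - tK) * ((x + z) * (y + z) / (x + y + 2 * z)) + (r - tM) * (z * (x + z) / x)
      ≤ ‖K' - M'‖ * ‖K - M‖ := by
    have h := real_inner_le_norm (K' - M') (K - M)
    rw [hR'c, hRc, expand] at h
    rw [← val_eR x y z tK tM s r hx0 hd0 htK htM]
    rw [hR'c, hRc]
    exact h
  have hfinal : ‖L - K‖ + ‖M - L‖ + ‖K - M‖ ≤ ‖L' - K'‖ + ‖M' - L'‖ + ‖K' - M'‖ :=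
    scalar_key x y z (s - tK) (t - tL) (r - tM) ‖L - K‖ ‖M - L‖ ‖K - M‖
      ‖L' - K'‖ ‖M' - L'‖ ‖K' - M'‖ hxz hyz hz
      (norm_nonneg _) (norm_nonneg _) (norm_nonneg _) nP2 nQ2 nR2 csP csQ csR
  rw [dist_eq_norm, dist_eq_norm, dist_eq_norm, dist_eq_norm, dist_eq_norm, dist_eq_norm,
    norm_sub_rev K L, norm_sub_rev L M, norm_sub_rev M K,
    norm_sub_rev K' L', norm_sub_rev L' M', norm_sub_rev M' K']
  exact hfinal
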